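/- arXiv:2403.17230 — 5 statements merged into one kernel-verified Lean document; each statement's English description precedes it below -/
import Mathlib

section
/- Let τ and ρ be the ℂ-algebra endomorphisms of R = ℂ[c₁, c₂, c₂', c₃] defined by τ(c₁) = c₁, τ(c₂) = c₂', τ(c₂') = c₂, τ(c₃) = c₃ + c₁·(c₂' − c₂), and ρ(c₁) = c₁, ρ(c₂) = c₂', ρ(c₂') = c₁² − c₂ − c₂', ρ(c₃) = c₃ + c₁·(c₂' − c₂). Then τ ∘ τ = id, ρ ∘ ρ ∘ ρ = id, and τ ∘ ρ ∘ τ = ρ ∘ ρ; in particular τ and ρ generate an action of the symmetric group S₃ on R by ℂ-algebra automorphisms, with τ corresponding to the transposition (12) and ρ to the 3-cycle (123). -/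
open MvPolynomial

/-- The ℂ-algebra endomorphism `τ` of `ℂ[c₁, c₂, c₂', c₃]` (variables `X 0 = c₁`,
`X 1 = c₂`, `X 2 = c₂'`, `X 3 = c₃`): `τ(c₁) = c₁`, `τ(c₂) = c₂'`, `τ(c₂') = c₂`,
`τ(c₃) = c₃ + c₁(c₂' − c₂)`. -/
noncomputable def tauA : MvPolynomial (Fin 4) ℂ →ₐ[ℂ] MvPolynomial (Fin 4) ℂ :=
  aeval ![X 0, X 2, X 1, X 3 + X 0 * (X 2 - X 1)]

/-- The ℂ-algebra endomorphism `ρ` of `ℂ[c₁, c₂, c₂', c₃]`: `ρ(c₁) = c₁`, `ρ(c₂) = c₂'`,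
`ρ(c₂') = c₁² − c₂ − c₂'`, `ρ(c₃) = c₃ + c₁(c₂' − c₂)`. -/
noncomputable def rhoA : MvPolynomial (Fin 4) ℂ →ₐ[ℂ] MvPolynomial (Fin 4) ℂ :=
  aeval ![X 0, X 2, X 0 ^ 2 - X 1 - X 2, X 3 + X 0 * (X 2 - X 1)]

@[simp]
lemma tauA_X (i : Fin 4) : tauA (X i) = ![X 0, X 2, X 1, X 3 + X 0 * (X 2 - X 1)] i :=
  aeval_X _ i

@[simp]
lemma rhoA_X (i : Fin 4) :
    rhoA (X i) = ![X 0, X 2, X 0 ^ 2 - X 1 - X 2, X 3 + X 0 * (X 2 - X 1)] i :=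
  aeval_X _ i

lemma tauA_comp_tauA : tauA.comp tauA = AlgHom.id ℂ (MvPolynomial (Fin 4) ℂ) := by
  ext i : 1
  fin_cases i <;> simp
  ring

lemma rhoA_comp_rhoA_comp_rhoA :
    rhoA.comp (rhoA.comp rhoA) = AlgHom.id ℂ (MvPolynomial (Fin 4) ℂ) := by
  ext i : 1
  fin_cases i <;> simp
  ring

lemma tauA_comp_rhoA_comp_tauA : tauA.comp (rhoA.comp tauA) = rhoA.comp rhoA := by
  ext i : 1
  fin_cases i <;> simp <;> ring

/-- `τ ∘ τ = id`, `ρ ∘ ρ ∘ ρ = id` and `τ ∘ ρ ∘ τ = ρ ∘ ρ`, so that `τ` and `ρ` generate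
an `S₃`-action on `ℂ[c₁, c₂, c₂', c₃]` by ℂ-algebra automorphisms, `τ` corresponding to
the transposition (12) and `ρ` to the 3-cycle (123). -/
theorem stmt_5 :
    tauA.comp tauA = AlgHom.id ℂ (MvPolynomial (Fin 4) ℂ) ∧
    rhoA.comp (rhoA.comp rhoA) = AlgHom.id ℂ (MvPolynomial (Fin 4) ℂ) ∧
    tauA.comp (rhoA.comp tauA) = rhoA.comp rhoA :=
  ⟨tauA_comp_tauA, rhoA_comp_rhoA_comp_rhoA, tauA_comp_rhoA_comp_tauA⟩
end

section
/- Let τ and ρ be the ℂ-algebra endomorphisms of R = ℂ[c₁, c₂, c₂', c₃] defined by τ(c₁) = c₁, τ(c₂) = c₂', τ(c₂') = c₂, τ(c₃) = c₃ + c₁·(c₂' − c₂), and ρ(c₁) = c₁, ρ(c₂) = c₂', ρ(c₂') = c₁² − c₂ − c₂', ρ(c₃) = c₃ + c₁·(c₂' − c₂). Define d₁ = c₁, d₃ = c₁·c₂ − c₃, d₄ = c₂² + c₂'² + c₂·c₂' − c₁²·(c₂ + c₂'), and d₆ = c₂·c₂'·(c₂ + c₂' − c₁²). Then each of d₁, d₃,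 d₄, d₆ is fixed by both τ and ρ. -/
open MvPolynomial

/-- `d₁ = c₁`. -/
noncomputable def d₁ : MvPolynomial (Fin 4) ℂ := X 0

/-- `d₃ = c₁c₂ − c₃`. -/
noncomputable def d₃ : MvPolynomial (Fin 4) ℂ := X 0 * X 1 - X 3

/-- `d₄ = c₂² + c₂'² + c₂c₂' − c₁²(c₂ + c₂')`. -/
noncomputable def d₄ : MvPolynomial (Fin 4) ℂ :=
  X 1 ^ 2 + X 2 ^ 2 + X 1 * X 2 - X 0 ^ 2 * (X 1 + X 2)

/-- `d₆ = c₂c₂'(c₂ + c₂' − c₁²)`. -/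
noncomputable def d₆ : MvPolynomial (Fin 4) ℂ :=
  X 1 * X 2 * (X 1 + X 2 - X 0 ^ 2)

/-! With `c₂'' := c₁² − c₂ − c₂'`, both maps fix `c₁` and permute `{c₂, c₂', c₂''}`: `τ` swaps
`c₂, c₂'` and `ρ` cycles `c₂ ↦ c₂' ↦ c₂'' ↦ c₂`. Up to sign, `d₄` and `d₆` are the second and
third elementary symmetric functions of `c₂, c₂', c₂''`, and the shift of `c₃` by
`c₁(c₂' − c₂)` is exactly what keeps `d₃ = c₁c₂ − c₃` fixed. -/

@[simp] theorem tauA_X_zero : tauA (X 0) = X 0 := by simp [tauA]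
@[simp] theorem tauA_X_one : tauA (X 1) = X 2 := by simp [tauA]
@[simp] theorem tauA_X_two : tauA (X 2) = X 1 := by simp [tauA]
@[simp] theorem tauA_X_three : tauA (X 3) = X 3 + X 0 * (X 2 - X 1) := by simp [tauA]

@[simp] theorem rhoA_X_zero : rhoA (X 0) = X 0 := by simp [rhoA]
@[simp] theorem rhoA_X_one : rhoA (X 1) = X 2 := by simp [rhoA]
@[simp] theorem rhoA_X_two : rhoA (X 2) = X 0 ^ 2 - X 1 - X 2 := by simp [rhoA]
@[simp] theorem rhoA_X_three : rhoA (X 3) = X 3 + X 0 * (X 2 - X 1) := by simp [rhoA]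

theorem tauA_d₁ : tauA d₁ = d₁ := tauA_X_zero

theorem rhoA_d₁ : rhoA d₁ = d₁ := rhoA_X_zero

theorem tauA_d₃ : tauA d₃ = d₃ := by
  simp only [d₃, map_sub, map_mul, tauA_X_zero, tauA_X_one, tauA_X_three]
  ring

theorem rhoA_d₃ : rhoA d₃ = d₃ := by
  simp only [d₃, map_sub, map_mul, rhoA_X_zero, rhoA_X_one, rhoA_X_three]
  ring

theorem tauA_d₄ : tauA d₄ = d₄ := by
  simp only [d₄, map_add, map_sub, map_mul, map_pow, tauA_X_zero, tauA_X_one, tauA_X_two]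
  ring

theorem rhoA_d₄ : rhoA d₄ = d₄ := by
  simp only [d₄, map_add, map_sub, map_mul, map_pow, rhoA_X_zero, rhoA_X_one, rhoA_X_two]
  ring

theorem tauA_d₆ : tauA d₆ = d₆ := by
  simp only [d₆, map_add, map_sub, map_mul, map_pow, tauA_X_zero, tauA_X_one, tauA_X_two]
  ring

theorem rhoA_d₆ : rhoA d₆ = d₆ := by
  simp only [d₆, map_add, map_sub, map_mul, map_pow, rhoA_X_zero, rhoA_X_one, rhoA_X_two]
  ring

/-- Each of the generators `d₁, d₃, d₄, d₆` of the `S₃`-invariant subring is fixed by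
both `τ` and `ρ`. -/
theorem stmt_6 :
    tauA d₁ = d₁ ∧ rhoA d₁ = d₁ ∧
    tauA d₃ = d₃ ∧ rhoA d₃ = d₃ ∧
    tauA d₄ = d₄ ∧ rhoA d₄ = d₄ ∧
    tauA d₆ = d₆ ∧ rhoA d₆ = d₆ :=
  ⟨tauA_d₁, rhoA_d₁, tauA_d₃, rhoA_d₃, tauA_d₄, rhoA_d₄, tauA_d₆, rhoA_d₆⟩
end

section
/- Let τ and ρ be the ℂ-algebra endomorphisms of R = ℂ[c₁, c₂, c₂', c₃] defined by τ(c₁) = c₁, τ(c₂) = c₂', τ(c₂') = c₂, τ(c₃) = c₃ + c₁·(c₂' − c₂), and ρ(c₁) = c₁, ρ(c₂) = c₂', ρ(c₂') = c₁² − c₂ − c₂', ρ(c₃) = c₃ + c₁·(c₂' − c₂). Define d₁ = c₁, d₃ = c₁·c₂ − c₃, d₄ = c₂² + c₂'² + c₂·c₂' − c₁²·(c₂ + c₂'), and d₆ = c₂·c₂'·(c₂ + c₂' − c₁²). Then a polynomial p ∈ R satisfies τ(p) = p and ρ(p) = p if and only if p lies in the ℂ-subalgebra of R generated by d₁, d₃,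 d₄, d₆. In other words, the invariant subring R^{S₃} for the S₃-action generated by τ and ρ equals ℂ[d₁, d₃, d₄, d₆]. -/
open MvPolynomial

/-! Put `x₀ = c₂`, `x₁ = c₂'`, `x₂ = c₁² − c₂ − c₂'`. Then `τ` and `ρ` fix `c₁` and `d₃` and permute
`(x₀, x₁, x₂)` by the transposition `(0 1)` and the 3-cycle `(0 1 2)`. Hence the surjection
`cover : ℂ[a, b][x₀, x₁, x₂] → R`, `a ↦ c₁`, `b ↦ d₃`, intertwines renaming of the `xᵢ` with the
`S₃`-action. An invariant `p` is then `1/6` of the image of the symmetrisation of any lift of `p`;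
that symmetrisation is a polynomial over `ℂ[a, b]` in `e₁, e₂, e₃`, and `cover` sends `a, b, e₁, e₂,
e₃` to `d₁, d₃, d₁², −d₄, −d₆`. -/

namespace MvPolynomial

variable {σ R : Type*}

theorem isSymmetric_sum_rename [CommSemiring R] [Fintype σ] [DecidableEq σ]
    (p : MvPolynomial σ R) : (∑ e : Equiv.Perm σ, rename e p).IsSymmetric := fun e => by
  simp only [map_sum, rename_rename]
  exact Fintype.sum_equiv (Equiv.mulLeft e) _ _ fun _ => rfl

theorem IsSymmetric.mem_adjoin_esymm [CommRing R] {n : ℕ} {p : MvPolynomial (Fin n) R}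
    (hp : p.IsSymmetric) :
    p ∈ Algebra.adjoin R (Set.range fun i : Fin n => esymm (Fin n) R (i + 1)) := by
  obtain ⟨f, hf⟩ := (esymmAlgHom_fin_bijective R n).2 ⟨p, hp⟩
  rw [Algebra.adjoin_range_eq_range_aeval]
  exact ⟨f, (esymmAlgHom_apply f).symm.trans (congrArg Subtype.val hf)⟩

end MvPolynomial

theorem Equiv.Perm.mem_submonoid_closure_finRotate_swap (n : ℕ) (g : Equiv.Perm (Fin (n + 2))) :
    g ∈ Submonoid.closure {finRotate (n + 2), Equiv.swap 0 1} := by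
  have h := closure_cycle_adjacent_swap isCycle_finRotate support_finRotate (0 : Fin (n + 2))
  rw [finRotate_apply, zero_add] at h
  simp [← Subgroup.closure_toSubmonoid_of_finite, h]

namespace S3Invariants

abbrev P := MvPolynomial (Fin 3) (MvPolynomial (Fin 2) ℂ)

noncomputable def cover : P →ₐ[ℂ] MvPolynomial (Fin 4) ℂ :=
  aevalTower (aeval ![X 0, d₃]) ![X 1, X 2, X 0 ^ 2 - X 1 - X 2]

noncomputable def coverSection : MvPolynomial (Fin 4) ℂ →ₐ[ℂ] P :=
  aeval ![C (X 0), X 0, X 1, C (X 0) * X 0 - C (X 1)]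

theorem cover_coverSection (p : MvPolynomial (Fin 4) ℂ) : cover (coverSection p) = p := by
  suffices cover.comp coverSection = AlgHom.id ℂ _ from DFunLike.congr_fun this p
  ext i
  fin_cases i <;> simp [cover, coverSection, aevalTower_X, aevalTower_C, d₃]

theorem cover_rename_swap (x : P) : cover (rename (Equiv.swap 0 1) x) = tauA (cover x) := by
  suffices cover.comp ((rename (Equiv.swap 0 1)).restrictScalars ℂ) = tauA.comp cover from
    DFunLike.congr_fun this x
  apply algHom_ext'
  · refine algHom_ext fun j => ?_
    fin_cases j <;> simp [cover, tauA, aevalTower_C, d₃]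
    ring
  · intro i
    fin_cases i <;> simp [cover, tauA, aevalTower_X, Equiv.swap_apply_of_ne_of_ne]
    ring

theorem cover_rename_finRotate (x : P) : cover (rename (finRotate 3) x) = rhoA (cover x) := by
  suffices cover.comp ((rename (finRotate 3)).restrictScalars ℂ) = rhoA.comp cover from
    DFunLike.congr_fun this x
  apply algHom_ext'
  · refine algHom_ext fun j => ?_
    fin_cases j <;> simp [cover, rhoA, aevalTower_C, d₃]
    ring
  · intro i
    fin_cases i <;> simp [cover, rhoA, aevalTower_X, finRotate_apply]

theorem cover_rename_of_fixed {p : MvPolynomial (Fin 4) ℂ} (hτ : tauA p = p) (hρ : rhoA p = p)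
    (g : Equiv.Perm (Fin 3)) {y : P} (hy : cover y = p) : cover (rename g y) = p := by
  induction Equiv.Perm.mem_submonoid_closure_finRotate_swap 1 g using
    Submonoid.closure_induction generalizing y with
  | mem g hg =>
    rcases hg with rfl | rfl
    · rw [cover_rename_finRotate, hy, hρ]
    · rw [cover_rename_swap, hy, hτ]
  | one => simpa using hy
  | mul g h _ _ ihg ihh =>
    rw [Equiv.Perm.coe_mul, ← rename_rename]
    exact ihg (ihh hy)

theorem cover_esymm_one : cover (esymm (Fin 3) _ 1) = d₁ ^ 2 := by
  simp [esymm_one, Fin.sum_univ_three, cover, aevalTower_X, d₁]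

theorem cover_esymm_two : cover (esymm (Fin 3) _ 2) = -d₄ := by
  simp [esymm_eq_multiset_esymm, Multiset.esymm, Fin.univ_val_map, Multiset.powersetCard_coe,
    List.sublistsLen, List.sublistsLenAux, cover, aevalTower_X, d₄]
  ring

theorem cover_esymm_three : cover (esymm (Fin 3) _ 3) = -d₆ := by
  simp [esymm_eq_multiset_esymm, Multiset.esymm, Fin.univ_val_map, Multiset.powersetCard_coe,
    List.sublistsLen, List.sublistsLenAux, cover, aevalTower_X, d₆]
  ring

theorem cover_mem_adjoin_of_isSymmetric {q : P} (hq : q.IsSymmetric) :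
    cover q ∈ Algebra.adjoin ℂ ({d₁, d₃, d₄, d₆} : Set (MvPolynomial (Fin 4) ℂ)) := by
  have hq' := hq.mem_adjoin_esymm
  rw [← Subalgebra.mem_restrictScalars ℂ,
    Algebra.adjoin_eq_adjoin_union _ _ _ (adjoin_range_X (R := ℂ))] at hq'
  have hcover : cover q ∈ (Algebra.adjoin ℂ _).map cover := Subalgebra.mem_map.2 ⟨q, hq', rfl⟩
  rw [AlgHom.map_adjoin] at hcover
  refine Algebra.adjoin_le ?_ hcover
  rintro _ ⟨x, ⟨_, ⟨j, rfl⟩, rfl⟩ | ⟨i, rfl⟩, rfl⟩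
  · fin_cases j
    · exact Algebra.subset_adjoin (by simp [cover, aevalTower_C, d₁])
    · exact Algebra.subset_adjoin (by simp [cover, aevalTower_C])
  · fin_cases i
    · rw [show cover (esymm (Fin 3) _ (0 + 1)) = _ from cover_esymm_one]
      exact pow_mem (Algebra.subset_adjoin (by simp)) 2
    · rw [show cover (esymm (Fin 3) _ (1 + 1)) = _ from cover_esymm_two]
      exact neg_mem (Algebra.subset_adjoin (by simp))
    · rw [show cover (esymm (Fin 3) _ (2 + 1)) = _ from cover_esymm_three]
      exact neg_mem (Algebra.subset_adjoin (by simp))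

theorem mem_adjoin_of_fixed {p : MvPolynomial (Fin 4) ℂ} (hτ : tauA p = p) (hρ : rhoA p = p) :
    p ∈ Algebra.adjoin ℂ ({d₁, d₃, d₄, d₆} : Set (MvPolynomial (Fin 4) ℂ)) := by
  have hsum : cover (∑ g : Equiv.Perm (Fin 3), rename g (coverSection p)) = (6 : ℂ) • p := by
    simp only [map_sum, cover_rename_of_fixed hτ hρ _ (cover_coverSection p), Finset.sum_const,
      Finset.card_univ, Fintype.card_perm, Fintype.card_fin]
    norm_num [Nat.factorial, ← Nat.cast_smul_eq_nsmul ℂ]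
  have h6 := cover_mem_adjoin_of_isSymmetric (isSymmetric_sum_rename (coverSection p))
  rw [hsum] at h6
  simpa using Subalgebra.smul_mem _ h6 (6 : ℂ)⁻¹

theorem fixed_of_mem_adjoin {p : MvPolynomial (Fin 4) ℂ}
    (hp : p ∈ Algebra.adjoin ℂ ({d₁, d₃, d₄, d₆} : Set (MvPolynomial (Fin 4) ℂ))) :
    tauA p = p ∧ rhoA p = p := by
  have fixed_of_eqOn (f : MvPolynomial (Fin 4) ℂ →ₐ[ℂ] MvPolynomial (Fin 4) ℂ)
      (hf : Set.EqOn f (AlgHom.id ℂ _) {d₁, d₃, d₄, d₆}) : f p = p :=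
    AlgHom.eqOn_adjoin_iff.2 hf hp
  refine ⟨fixed_of_eqOn tauA ?_, fixed_of_eqOn rhoA ?_⟩ <;>
    rintro _ (rfl | rfl | rfl | rfl) <;> simp [tauA, rhoA, d₁, d₃, d₄, d₆] <;> ring

end S3Invariants

/-- A polynomial `p ∈ ℂ[c₁, c₂, c₂', c₃]` is fixed by both `τ` and `ρ` (i.e. is
`S₃`-invariant) if and only if it lies in the ℂ-subalgebra generated by
`d₁, d₃, d₄, d₆`: the invariant subring is `ℂ[d₁, d₃, d₄, d₆]`. -/
theorem stmt_8 (p : MvPolynomial (Fin 4) ℂ) :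
    (tauA p = p ∧ rhoA p = p) ↔
      p ∈ Algebra.adjoin ℂ ({d₁, d₃, d₄, d₆} : Set (MvPolynomial (Fin 4) ℂ)) :=
  ⟨fun h => S3Invariants.mem_adjoin_of_fixed h.1 h.2, S3Invariants.fixed_of_mem_adjoin⟩
end

section
/- Let τ and ρ be the ℂ-algebra endomorphisms of R = ℂ[c₁, c₂, c₂', c₃] defined by τ(c₁) = c₁, τ(c₂) = c₂', τ(c₂') = c₂, τ(c₃) = c₃ + c₁·(c₂' − c₂), and ρ(c₁) = c₁, ρ(c₂) = c₂', ρ(c₂') = c₁² − c₂ − c₂', ρ(c₃) = c₃ + c₁·(c₂' − c₂). In R set c₃' = c₃ + c₁·(c₂' − c₂), c₄ = c₁·(c₃ + c₃') − (c₂² + c₂·c₂' + c₂'²), c₆ = c₃² − c₁·c₂·(c₃ + c₃') + c₂·c₂'·(c₂ + c₂'), and Δ = 4·c₄³ + 27·c₆². Then τ(c₄) = c₄, ρ(c₄) = c₄, τ(c₆) = c₆, ρ(c₆) = c₆, and consequently τ(Δ) = Δ and ρ(Δ) = Δ. -/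
open MvPolynomial

/-- `c₃' = c₃ + c₁(c₂' − c₂)`. -/
noncomputable def c₃' : MvPolynomial (Fin 4) ℂ := X 3 + X 0 * (X 2 - X 1)

/-- The Weierstrass coefficient `c₄ = c₁(c₃ + c₃') − (c₂² + c₂c₂' + c₂'²)`. -/
noncomputable def c₄ : MvPolynomial (Fin 4) ℂ :=
  X 0 * (X 3 + c₃') - (X 1 ^ 2 + X 1 * X 2 + X 2 ^ 2)

/-- The Weierstrass coefficient `c₆ = c₃² − c₁c₂(c₃ + c₃') + c₂c₂'(c₂ + c₂')`. -/
noncomputable def c₆ : MvPolynomial (Fin 4) ℂ :=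
  X 3 ^ 2 - X 0 * X 1 * (X 3 + c₃') + X 1 * X 2 * (X 1 + X 2)

/-- The discriminant `Δ = 4c₄³ + 27c₆²`. -/
noncomputable def Δ : MvPolynomial (Fin 4) ℂ := 4 * c₄ ^ 3 + 27 * c₆ ^ 2

section Evaluation

variable {A : Type*} [CommRing A] [Algebra ℂ A] (f : Fin 4 → A)

theorem aeval_c₃' : aeval f c₃' = f 3 + f 0 * (f 2 - f 1) := by
  simp [c₃']

theorem aeval_c₄ :
    aeval f c₄ = f 0 * (f 3 + (f 3 + f 0 * (f 2 - f 1))) - (f 1 ^ 2 + f 1 * f 2 + f 2 ^ 2) := by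
  simp [c₄, aeval_c₃']

theorem aeval_c₆ :
    aeval f c₆ = f 3 ^ 2 - f 0 * f 1 * (f 3 + (f 3 + f 0 * (f 2 - f 1))) +
      f 1 * f 2 * (f 1 + f 2) := by
  simp [c₆, aeval_c₃']

end Evaluation

theorem tauA_c₄ : tauA c₄ = c₄ := by
  rw [tauA, aeval_c₄, c₄, c₃']
  simp only [Matrix.cons_val]
  ring

theorem rhoA_c₄ : rhoA c₄ = c₄ := by
  rw [rhoA, aeval_c₄, c₄, c₃']
  simp only [Matrix.cons_val]
  ring

theorem tauA_c₆ : tauA c₆ = c₆ := by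
  rw [tauA, aeval_c₆, c₆, c₃']
  simp only [Matrix.cons_val]
  ring

theorem rhoA_c₆ : rhoA c₆ = c₆ := by
  rw [rhoA, aeval_c₆, c₆, c₃']
  simp only [Matrix.cons_val]
  ring

theorem map_Δ_eq_self {F : Type*} [FunLike F (MvPolynomial (Fin 4) ℂ) (MvPolynomial (Fin 4) ℂ)]
    [RingHomClass F (MvPolynomial (Fin 4) ℂ) (MvPolynomial (Fin 4) ℂ)] (φ : F)
    (h₄ : φ c₄ = c₄) (h₆ : φ c₆ = c₆) : φ Δ = Δ := by
  simp [Δ, h₄, h₆, map_ofNat]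

/-- The Weierstrass coefficients `c₄, c₆` and hence the discriminant `Δ = 4c₄³ + 27c₆²`
are fixed by both generators `τ` and `ρ` of the `S₃`-action. -/
theorem stmt_9 :
    tauA c₄ = c₄ ∧ rhoA c₄ = c₄ ∧
    tauA c₆ = c₆ ∧ rhoA c₆ = c₆ ∧
    tauA Δ = Δ ∧ rhoA Δ = Δ :=
  ⟨tauA_c₄, rhoA_c₄, tauA_c₆, rhoA_c₆, map_Δ_eq_self tauA tauA_c₄ tauA_c₆,
    map_Δ_eq_self rhoA rhoA_c₄ rhoA_c₆⟩
end

section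
/- Let A be a Noetherian local commutative ring with maximal ideal m in which 2 is a unit, and suppose m is principal, generated by an element f. Let σ : A → A be a ring automorphism with σ ∘ σ = id such that σ(a) − a ∈ m for every a ∈ A and σ(f) − f ∈ m². Then σ is the identity map of A. -/
/-!
Write `δ a = σ a - a`. Since `σ` is trivial on `A/m` and on `m/m²`, the product rule
`δ (x y) = σ x · δ y + δ x · y` shows that `σ` moves every element of `m ^ k` only by an
element of `m ^ (k + 1)`. If `δ A ⊆ m ^ k`, then applying this to `δ a ∈ m ^ k` and using
`σ (δ a) = -δ a` (as `σ` is an involution) gives `2 δ a ∈ m ^ (k + 1)`, so `δ a ∈ m ^ (k + 1)`.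
Hence `δ A ⊆ ⋂ₖ m ^ k = 0` by Krull's intersection theorem.
-/

namespace Ideal

variable {A F : Type*} [CommRing A] [FunLike F A A] [RingHomClass F A A] {σ : F}

theorem map_sub_self_mem_sq_of_mem_span_singleton {f : A}
    (hσ : ∀ a, σ a - a ∈ span {f}) (hf : σ f - f ∈ span {f} ^ 2) :
    ∀ x ∈ span {f}, σ x - x ∈ span {f} ^ 2 := by
  intro x hx
  obtain ⟨c, rfl⟩ := mem_span_singleton'.mp hx
  have hfI : f ∈ span {f} := mem_span_singleton_self f
  have key : σ (c * f) - c * f = σ c * (σ f - f) + (σ c - c) * f := by rw [map_mul]; ring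
  rw [key, sq]
  rw [sq] at hf
  exact add_mem (mul_mem_left _ _ hf) (mul_mem_mul (hσ c) hfI)

variable {I : Ideal A} (h₁ : ∀ a, σ a - a ∈ I) (h₂ : ∀ x ∈ I, σ x - x ∈ I ^ 2)
include h₁ h₂

theorem map_sub_self_mem_pow_succ_of_mem_pow :
    ∀ k : ℕ, ∀ x ∈ I ^ k, σ x - x ∈ I ^ (k + 1)
  | 0, x, _ => by simpa using h₁ x
  | k + 1, x, hx => by
    rw [pow_succ'] at hx
    refine Submodule.mul_induction_on hx (fun y hy z hz => ?_) (fun y z hy hz => ?_)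
    · have hσy : σ y ∈ I := by simpa using add_mem (h₁ y) hy
      have key : σ (y * z) - y * z = σ y * (σ z - z) + (σ y - y) * z := by rw [map_mul]; ring
      rw [key]
      refine add_mem ?_ ?_
      · simpa only [← pow_succ'] using
          mul_mem_mul hσy (map_sub_self_mem_pow_succ_of_mem_pow k z hz)
      · simpa only [← pow_add, show 2 + k = k + 1 + 1 by ring] using mul_mem_mul (h₂ y hy) hz
    · simpa only [map_add, add_sub_add_comm] using add_mem hy hz

theorem map_sub_self_mem_pow_of_involutive (h2 : IsUnit (2 : A)) (hσ : ∀ a, σ (σ a) = a) :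
    ∀ (k : ℕ) (a : A), σ a - a ∈ I ^ k
  | 0, _ => by simp
  | k + 1, a => by
    have h := map_sub_self_mem_pow_succ_of_mem_pow h₁ h₂ k _
      (map_sub_self_mem_pow_of_involutive h2 hσ k a)
    rw [map_sub, hσ, show a - σ a - (σ a - a) = -(2 * (σ a - a)) by ring, neg_mem_iff] at h
    exact (unit_mul_mem_iff_mem _ h2).mp h

end Ideal

/-- Local-ring rigidity (core of the paper's Lemma 3.7): if `A` is a Noetherian local
commutative ring in which `2` is a unit, whose maximal ideal is principal with generator
`f`, and `σ` is a ring involution of `A` such that `σ(a) − a ∈ m` for all `a` and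
`σ(f) − f ∈ m²`, then `σ` is the identity. -/
theorem stmt_11 {A : Type*} [CommRing A] [IsNoetherianRing A] [IsLocalRing A]
    (h2 : IsUnit (2 : A)) (f : A)
    (hf : IsLocalRing.maximalIdeal A = Ideal.span {f})
    (σ : A ≃+* A) (hσ : ∀ a, σ (σ a) = a)
    (hm : ∀ a, σ a - a ∈ IsLocalRing.maximalIdeal A)
    (hf2 : σ f - f ∈ IsLocalRing.maximalIdeal A ^ 2) :
    ∀ a, σ a = a := by
  intro a
  have hKrull : ⨅ k : ℕ, IsLocalRing.maximalIdeal A ^ k = ⊥ :=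
    Ideal.iInf_pow_eq_bot_of_isLocalRing _ (IsLocalRing.maximalIdeal.isMaximal A).ne_top
  rw [hf] at hm hf2 hKrull
  have hsq := Ideal.map_sub_self_mem_sq_of_mem_span_singleton hm hf2
  have hbot : σ a - a ∈ (⊥ : Ideal A) := hKrull ▸ Ideal.mem_iInf.mpr fun k =>
    Ideal.map_sub_self_mem_pow_of_involutive hm hsq h2 hσ k a
  exact sub_eq_zero.mp (Ideal.mem_bot.mp hbot)
end
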